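/- (Lemma 1.) For all integers n ≥ 1 and k ≥ 0, the following identity holds in K = ℚ(q): ∑_{i=0}^{k−1} (−1)^i · q^{(k−i−1)²} / [2k−2i−2]_q! · ( c_{n,i+1} + d_{n,i}/[2k−2i−1]_q ) = (−1)^n · q^{(5 + 3(−1)^n − 12k − 4(−1)^n k + 8k² + 8n − 8kn + 4n² − 2(−1)^n n²)/8} · ( ∏_{s=k−n}^{k} [2s]_q ) / [2k]_q!, where the product runs over all integers s with k−n ≤ s ≤ k and [m]_q = (1−q^m)/(1−q) also for m ≤ 0. (In particular the right-hand side vanishes whenever 0 ≤ k ≤ n, since then the product contains the factor [0]_q = 0.) -/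

import Mathlib

noncomputable section

/-- The field `K = ℚ(q)` of rational functions over `ℚ`. -/
abbrev K : Type := RatFunc ℚ

/-- The indeterminate `q`. -/
def q : K := RatFunc.X

/-- The `q`-integer `[m]_q = (1 - q^m)/(1 - q)`, for any integer `m`. -/
def qint (m : ℤ) : K := (1 - q ^ m) / (1 - q)

/-- The `q`-factorial `[n]_q! = [1]_q [2]_q ⋯ [n]_q`. -/
def qfact : ℕ → K
  | 0 => 1
  | n + 1 => qfact n * qint (n + 1)

/-- `b 0 = 0` and `b n = [2n-1]_q q^{(-1)^(n-1) n(n-1)/2 - n + 1}` for `n ≥ 1`. -/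
def b (n : ℕ) : K :=
  if n = 0 then 0
  else qint (2 * n - 1) *
    q ^ ((-1 : ℤ) ^ (n - 1) * ((n : ℤ) * ((n : ℤ) - 1) / 2) - (n : ℤ) + 1)

/-- `A m` is the polynomial `A_{m-1}` of the paper (index shifted by one, so
`A 0 = A_{-1} = 1`, `A 1 = A_0 = 0`). -/
def A : ℕ → Polynomial K
  | 0 => 1
  | 1 => 0
  | (n + 2) => Polynomial.C (b (n + 1)) * A (n + 1) - Polynomial.X ^ 2 * A n

/-- `B m` is the polynomial `B_{m-1}` of the paper (index shifted by one, so
`B 0 = B_{-1} = 0`, `B 1 = B_0 = 1`). -/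
def B : ℕ → Polynomial K
  | 0 => 0
  | 1 => 1
  | (n + 2) => Polynomial.C (b (n + 1)) * B (n + 1) - Polynomial.X ^ 2 * B n

/-- `c n j` is the coefficient of `z^(2j)` in `A_n` (and `0` for `j < 0`). -/
def c (n : ℤ) (j : ℤ) : K :=
  if j < 0 then 0 else (A (n + 1).toNat).coeff (2 * j).toNat

/-- `d n j` is the coefficient of `z^(2j)` in `B_n` (and `0` for `j < 0`). -/
def d (n : ℤ) (j : ℤ) : K :=
  if j < 0 then 0 else (B (n + 1).toNat).coeff (2 * j).toNat

/-- `sin_q(z) = ∑ (-1)^n q^(n^2) z^(2n+1)/[2n+1]_q!` as a formal power series. -/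
def sinq : PowerSeries K :=
  PowerSeries.mk fun m =>
    if m % 2 = 1 then (-1 : K) ^ (m / 2) * q ^ ((m / 2) ^ 2) / qfact m else 0

/-- `cos_q(z) = ∑ (-1)^n q^(n^2) z^(2n)/[2n]_q!` as a formal power series. -/
def cosq : PowerSeries K :=
  PowerSeries.mk fun m =>
    if m % 2 = 0 then (-1 : K) ^ (m / 2) * q ^ ((m / 2) ^ 2) / qfact m else 0

/-- The `q`-Pochhammer symbol `(a; p)_m = (1-a)(1-ap)⋯(1-ap^(m-1))`. -/
def qpoch (a p : K) : ℕ → K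
  | 0 => 1
  | m + 1 => qpoch a p m * (1 - a * p ^ m)



-- ===== auxiliary development =====

lemma hq0 : q ≠ 0 := RatFunc.X_ne_zero

lemma qpow_ne_one : ∀ m : ℕ, m ≠ 0 → q ^ m ≠ 1 := by
  intro m hm h
  have : (Polynomial.X : Polynomial ℚ) ^ m = 1 := by
    apply RatFunc.algebraMap_injective ℚ
    simpa [q, RatFunc.algebraMap_X, map_pow] using h
  have := congrArg Polynomial.natDegree this
  simp [Polynomial.natDegree_X_pow] at this
  exact hm this

lemma qzpow_ne_one (m : ℤ) (hm : m ≠ 0) : q ^ m ≠ 1 := by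
  rcases m.lt_or_lt_of_ne hm with h | h
  · intro hc
    have hc' : q ^ (-m) = 1 := by
      have := congrArg (·⁻¹) hc
      simpa [← zpow_neg] using this
    lift -m to ℕ using (by omega : (0:ℤ) ≤ -m) with mm hmm
    rw [zpow_natCast] at hc'
    exact qpow_ne_one mm (by omega) hc'
  · lift m to ℕ using h.le
    rw [zpow_natCast]
    exact qpow_ne_one m (by exact_mod_cast hm)

lemma hq1 : (1 : K) - q ≠ 0 := by
  have := qpow_ne_one 1 one_ne_zero
  rw [sub_ne_zero]
  intro h
  exact this (by rw [pow_one, ← h])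

lemma qint_ne_zero (m : ℤ) (hm : m ≠ 0) : qint m ≠ 0 :=
  div_ne_zero (sub_ne_zero.mpr fun h => qzpow_ne_one m hm h.symm) hq1

lemma qint_zero : qint 0 = 0 := by simp [qint]

lemma qint_one : qint 1 = 1 := by rw [qint, zpow_one, div_self hq1]

lemma qfact_ne_zero : ∀ n, qfact n ≠ 0
  | 0 => one_ne_zero
  | n + 1 => mul_ne_zero (qfact_ne_zero n) (qint_ne_zero _ (by omega))

lemma qint_mul (x : ℤ) : qint x * (1 - q) = 1 - q ^ x := div_mul_cancel₀ _ hq1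

lemma qint_succ (x : ℤ) : qint (x+1) = 1 + q * qint x := by
  have h := qint_mul x
  rw [qint, zpow_add₀ hq0, zpow_one, div_eq_iff hq1]
  linear_combination (-q) * h

lemma b_one : b 1 = 1 := by norm_num [b, qint_one]

lemma c_nat (n j : ℕ) : c n j = (A (n+1)).coeff (2*j) := by
  have h1 : (((n:ℤ))+1).toNat = n+1 := by omega
  have h2 : (2*((j:ℤ))).toNat = 2*j := by omega
  rw [c, if_neg (by omega), h1, h2]

lemma d_nat (n j : ℕ) : d n j = (B (n+1)).coeff (2*j) := by
  have h1 : (((n:ℤ))+1).toNat = n+1 := by omega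
  have h2 : (2*((j:ℤ))).toNat = 2*j := by omega
  rw [d, if_neg (by omega), h1, h2]

lemma c_nat' (n i : ℕ) : c n ((i:ℤ)+1) = (A (n+1)).coeff (2*i+2) := by
  have : ((i:ℤ)+1) = ((i+1 : ℕ) : ℤ) := by push_cast; ring
  rw [this, c_nat]
  have h : 2*(i+1) = 2*i+2 := by omega
  rw [h]

lemma d_nat' (n i : ℕ) : d n ((i:ℤ)+1) = (B (n+1)).coeff (2*i+2) := by
  have : ((i:ℤ)+1) = ((i+1 : ℕ) : ℤ) := by push_cast; ring
  rw [this, d_nat]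
  have h : 2*(i+1) = 2*i+2 := by omega
  rw [h]

lemma A_add2 (n : ℕ) : A (n+2) = Polynomial.C (b (n+1)) * A (n+1) - Polynomial.X^2 * A n := by rw [A]
lemma B_add2 (n : ℕ) : B (n+2) = Polynomial.C (b (n+1)) * B (n+1) - Polynomial.X^2 * B n := by rw [B]
lemma A_one : A 1 = 0 := rfl
lemma B_one : B 1 = 1 := rfl
lemma A_two : A 2 = -(Polynomial.X ^ 2) := by
  rw [show 2 = 0+2 by omega, A_add2, b_one, A_one]
  show _ - Polynomial.X^2 * 1 = _
  simp
lemma B_two : B 2 = 1 := by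
  rw [show 2 = 0+2 by omega, B_add2, b_one, B_one]
  show _ - Polynomial.X^2 * 0 = _
  simp

lemma c_rec (t i : ℕ) : c (↑(t+2)) ((i:ℤ)+1)
    = b (t+2) * c (↑(t+1)) ((i:ℤ)+1) - c t i := by
  rw [c_nat', c_nat', c_nat]
  rw [show t+2+1 = (t+1)+2 by omega, A_add2]
  rw [Polynomial.coeff_sub, Polynomial.coeff_C_mul, Polynomial.coeff_X_pow_mul]

lemma d_rec (t i : ℕ) : d (↑(t+2)) ((i:ℤ)+1)
    = b (t+2) * d (↑(t+1)) ((i:ℤ)+1) - d t i := by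
  rw [d_nat', d_nat', d_nat]
  rw [show t+2+1 = (t+1)+2 by omega, B_add2]
  rw [Polynomial.coeff_sub, Polynomial.coeff_C_mul, Polynomial.coeff_X_pow_mul]

lemma d_rec0 (t : ℕ) : d (↑(t+2)) 0 = b (t+2) * d (↑(t+1)) 0 := by
  have h0 : (0:ℤ) = ((0:ℕ):ℤ) := rfl
  rw [h0, d_nat, d_nat]
  rw [show t+2+1 = (t+1)+2 by omega, B_add2]
  simp [Polynomial.mul_coeff_zero, Polynomial.coeff_X_pow]

lemma c_zero : ∀ t : ℕ, c t 0 = 0 := by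
  have key : ∀ t : ℕ, (A (t+1)).coeff 0 = 0 := by
    intro t
    induction t using Nat.strong_induction_on with
    | _ t IH =>
      match t, IH with
      | 0, _ => simp [A_one]
      | 1, _ => simp [A_two]
      | (t+2), IH =>
        rw [show t+2+1 = (t+1)+2 by omega, A_add2]
        simp [Polynomial.mul_coeff_zero, Polynomial.coeff_X_pow, IH (t+1) (by omega)]
  intro t
  have h0 : (0:ℤ) = ((0:ℕ):ℤ) := rfl
  rw [h0, c_nat]
  simpa using key t

def eexp (n k : ℕ) : ℤ :=
  (5 + 3 * (-1 : ℤ) ^ n - 12 * (k : ℤ) - 4 * (-1 : ℤ) ^ n * (k : ℤ) +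
            8 * (k : ℤ) ^ 2 + 8 * (n : ℤ) - 8 * (k : ℤ) * (n : ℤ) + 4 * (n : ℤ) ^ 2 -
            2 * (-1 : ℤ) ^ n * (n : ℤ) ^ 2) / 8

lemma ediv8 (a bb : ℤ) (h : a = 8 * bb) : a / 8 = bb := by omega
lemma ediv2 (a bb : ℤ) (h : a = 2 * bb) : a / 2 = bb := by omega

lemma neg_one_pow_even (m : ℕ) : (-1 : ℤ) ^ (2*m) = 1 := by
  rw [pow_mul]; norm_num

lemma neg_one_pow_odd (m : ℕ) : (-1 : ℤ) ^ (2*m+1) = -1 := by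
  rw [pow_add, pow_mul]; norm_num

lemma eexp_even (m k : ℕ) : eexp (2*m) k = ((k:ℤ) - 1 - m)^2 := by
  rw [eexp, neg_one_pow_even]
  apply ediv8
  push_cast
  ring

lemma eexp_odd (m k : ℕ) : eexp (2*m+1) k = ((k:ℤ) - 1 - m)^2 + (2*m+1)*(m+1) := by
  rw [eexp, neg_one_pow_odd]
  apply ediv8
  push_cast
  ring

lemma master (a1 a2 a3 c1 c2 c3 : ℤ)
    (h : q^a1 - q^(a1+c1) + q^a2 - q^(a2+c2) - q^a3 + q^(a3+c3) = 0) :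
    q ^ a1 * qint c1 = -(qint c2 * q ^ a2) + q ^ a3 * qint c3 := by
  rw [zpow_add₀ hq0, zpow_add₀ hq0, zpow_add₀ hq0] at h
  rw [qint, qint, qint, div_eq_mul_inv, div_eq_mul_inv, div_eq_mul_inv]
  linear_combination (1-q)⁻¹ * h

lemma b_even (m : ℕ) : b (2*m+2) = qint (4*m+3) * q ^ (-(((m:ℤ)+1)*(2*m+1)) - (2*m+2) + 1) := by
  rw [b, if_neg (by omega)]
  congr 2
  · push_cast; ring
  · congr 1
    congr 1
    rw [show 2*m+2-1 = 2*m+1 by omega, neg_one_pow_odd]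
    rw [ediv2 _ (((m:ℤ)+1)*(2*m+1)) (by push_cast; ring)]
    ring

lemma b_odd (m : ℕ) : b (2*m+3) = qint (4*m+5) * q ^ ((((2*m:ℤ)+3)*(m+1)) - (2*m+3) + 1) := by
  rw [b, if_neg (by omega)]
  congr 2
  · push_cast; ring
  · congr 1
    congr 1
    rw [show 2*m+3-1 = 2*(m+1) by omega, neg_one_pow_even]
    rw [ediv2 _ (((2*m:ℤ)+3)*(m+1)) (by push_cast; ring)]
    ring

lemma key_scalar (t k : ℕ) : q ^ (eexp (t+2) (k+1)) * qint (2*(k:ℤ)-2*(t:ℤ)-2)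
    = -(b (t+2) * q ^ (eexp (t+1) (k+1))) + q ^ (eexp t k) * qint (2*(k:ℤ)+1) := by
  rcases Nat.even_or_odd t with h | h
  · obtain ⟨m, rfl⟩ : ∃ m, t = 2*m := by rcases h with ⟨m,hm⟩; exact ⟨m, by omega⟩
    rw [b_even m, mul_assoc, ← zpow_add₀ hq0]
    rw [show (2*m+2 : ℕ) = 2*(m+1) by ring, eexp_even (m+1) (k+1),
      eexp_odd m (k+1), eexp_even m k]
    apply master
    push_cast
    ring_nf
  · obtain ⟨m, rfl⟩ : ∃ m, t = 2*m+1 := by rcases h with ⟨m,hm⟩; exact ⟨m, by omega⟩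
    rw [show (2*m+1+2 : ℕ) = 2*m+3 by ring, b_odd m, mul_assoc, ← zpow_add₀ hq0]
    rw [show (2*m+3 : ℕ) = 2*(m+1)+1 by ring, eexp_odd (m+1) (k+1),
      show (2*m+1+1 : ℕ) = 2*(m+1) by ring, eexp_even (m+1) (k+1), eexp_odd m k]
    apply master
    push_cast
    ring_nf

def lhs (n k : ℕ) : K :=
  ∑ i ∈ Finset.range k,
      (-1 : K) ^ i * q ^ ((k - i - 1) ^ 2) / qfact (2 * k - 2 * i - 2) *
        (c (n : ℤ) ((i : ℤ) + 1) + d (n : ℤ) (i : ℤ) / qint (2 * (k : ℤ) - 2 * (i : ℤ) - 1))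

def rhs (n k : ℕ) : K :=
  (-1 : K) ^ n * q ^ (eexp n k) *
      (∏ s ∈ Finset.Icc ((k : ℤ) - (n : ℤ)) (k : ℤ), qint (2 * s)) / qfact (2 * k)

lemma prod_Icc_bot (f : ℤ → K) {a bb : ℤ} (h : a ≤ bb) :
    ∏ s ∈ Finset.Icc a bb, f s = f a * ∏ s ∈ Finset.Icc (a+1) bb, f s := by
  rw [show Finset.Icc a bb = insert a (Finset.Icc (a+1) bb) by
    ext x; simp only [Finset.mem_Icc, Finset.mem_insert]; omega]
  rw [Finset.prod_insert (by simp only [Finset.mem_Icc]; omega)]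

lemma prod_Icc_top (f : ℤ → K) {a bb : ℤ} (h : a ≤ bb) :
    ∏ s ∈ Finset.Icc a bb, f s = (∏ s ∈ Finset.Icc a (bb-1), f s) * f bb := by
  rw [show Finset.Icc a bb = insert bb (Finset.Icc a (bb-1)) by
    ext x; simp only [Finset.mem_Icc, Finset.mem_insert]; omega]
  rw [Finset.prod_insert (by simp only [Finset.mem_Icc]; omega)]
  ring

lemma qfact_two (k : ℕ) : qfact (2*(k+1)) = qfact (2*k) * qint (2*(k:ℤ)+1) * qint (2*(k:ℤ)+2) := by
  rw [show 2*(k+1) = (2*k+1)+1 by ring, qfact, qfact]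
  push_cast
  ring_nf

lemma rhs_rec (t k : ℕ) : rhs (t+2) (k+1) = b (t+2) * rhs (t+1) (k+1) + rhs t k := by
  have hF := qfact_ne_zero (2*k)
  have hu : qint (2*(k:ℤ)+1) ≠ 0 := qint_ne_zero _ (by omega)
  have hc4 : qint (2*(k:ℤ)+2) ≠ 0 := qint_ne_zero _ (by omega)
  set P : K := ∏ s ∈ Finset.Icc ((k:ℤ) - (t:ℤ)) (k:ℤ), qint (2*s) with hP
  have h1 : (∏ s ∈ Finset.Icc (((k:ℕ)+1 : ℤ) - ((t:ℕ)+1 : ℤ)) ((k:ℕ)+1 : ℤ), qint (2*s))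
      = P * qint (2*(k:ℤ)+2) := by
    rw [show (((k:ℕ)+1 : ℤ) - ((t:ℕ)+1 : ℤ)) = (k:ℤ) - (t:ℤ) by ring]
    rw [prod_Icc_top (fun s => qint (2*s)) (by omega : (k:ℤ) - (t:ℤ) ≤ (k:ℤ)+1)]
    rw [show ((k:ℤ)+1-1) = (k:ℤ) by ring]
    rw [show (2*((k:ℤ)+1)) = 2*(k:ℤ)+2 by ring]
  have h2 : (∏ s ∈ Finset.Icc (((k:ℕ)+1 : ℤ) - ((t:ℕ)+2 : ℤ)) ((k:ℕ)+1 : ℤ), qint (2*s))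
      = qint (2*(k:ℤ)-2*(t:ℤ)-2) * (P * qint (2*(k:ℤ)+2)) := by
    rw [prod_Icc_bot (fun s => qint (2*s)) (by omega : ((k:ℕ)+1 : ℤ) - ((t:ℕ)+2 : ℤ) ≤ (k:ℤ)+1)]
    rw [← h1]
    rw [show (((k:ℕ)+1 : ℤ) - ((t:ℕ)+2 : ℤ) + 1) = (((k:ℕ)+1 : ℤ) - ((t:ℕ)+1 : ℤ)) by ring]
    rw [show (2*(((k:ℕ)+1 : ℤ) - ((t:ℕ)+2 : ℤ))) = 2*(k:ℤ)-2*(t:ℤ)-2 by push_cast; ring]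
  rw [rhs, rhs, rhs]
  push_cast
  rw [h1, h2, qfact_two]
  have key := key_scalar t k
  have hsgn : (-1 : K)^(t+2) = (-1:K)^t := by ring
  have hsgn1 : (-1 : K)^(t+1) = -(-1:K)^t := by ring
  rw [hsgn, hsgn1]
  field_simp
  linear_combination P * key

lemma lhs_rec (t k : ℕ) : lhs (t+2) (k+1) = b (t+2) * lhs (t+1) (k+1) + lhs t k := by
  rw [lhs, lhs, lhs, ← sub_eq_iff_eq_add', Finset.mul_sum, ← Finset.sum_sub_distrib,
    Finset.sum_range_succ']
  have h0 : ∀ x y : K,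
      x * (c (↑(t+2)) (((0:ℕ):ℤ)+1) + d (↑(t+2)) ((0:ℕ):ℤ) / y)
        - b (t+2) * (x * (c (↑(t+1)) (((0:ℕ):ℤ)+1) + d (↑(t+1)) ((0:ℕ):ℤ) / y)) = 0 := by
    intro x y
    have hc := c_rec t 0
    have hd : d (↑(t+2)) ((0:ℕ):ℤ) = b (t+2) * d (↑(t+1)) ((0:ℕ):ℤ) := by
      simpa using d_rec0 t
    simp only [Nat.cast_zero] at hc hd ⊢
    rw [hc, hd, c_zero]
    ring
  rw [h0, add_zero]
  apply Finset.sum_congr rfl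
  intro i hi
  have hc : c (↑(t+2)) (((i+1:ℕ):ℤ)+1) = b (t+2) * c (↑(t+1)) (((i+1:ℕ):ℤ)+1) - c t (i+1) := by
    have := c_rec t (i+1); push_cast at this ⊢; exact this
  have hd : d (↑(t+2)) ((i+1:ℕ):ℤ) = b (t+2) * d (↑(t+1)) ((i+1:ℕ):ℤ) - d t i := by
    have := d_rec t i; push_cast at this ⊢; exact this
  rw [hc, hd]
  rw [show k+1-(i+1)-1 = k-i-1 by omega, show 2*(k+1)-2*(i+1)-2 = 2*k-2*i-2 by omega,
    show 2*((k+1:ℕ):ℤ) - 2*((i+1:ℕ):ℤ) - 1 = 2*(k:ℤ)-2*(i:ℤ)-1 by push_cast; ring]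
  rw [pow_succ]
  push_cast
  ring

lemma lhs_zero (n : ℕ) : lhs n 0 = 0 := by simp [lhs]

lemma rhs_zero (n : ℕ) : rhs n 0 = 0 := by
  rw [rhs, Finset.prod_eq_zero (i := (0:ℤ))]
  · simp
  · simp only [Finset.mem_Icc]; omega
  · norm_num [qint_zero]

lemma main0 : ∀ k, lhs 0 k = rhs 0 k := by
  intro k
  match k with
  | 0 => rw [lhs_zero, rhs_zero]
  | (k+1) =>
    rw [lhs, Finset.sum_eq_single 0]
    · have hc : c ((0:ℕ):ℤ) (((0:ℕ):ℤ)+1) = 0 := by rw [c_nat' 0 0, A_one]; simp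
      have hd : d ((0:ℕ):ℤ) ((0:ℕ):ℤ) = 1 := by rw [d_nat 0 0, B_one]; simp
      rw [hc, hd]
      rw [rhs]
      have he : eexp 0 (k+1) = ((k:ℤ))^2 := by
        rw [show eexp 0 (k+1) = eexp (2*0) (k+1) from rfl, eexp_even]
        push_cast; ring
      rw [he, show ((k:ℤ))^2 = ((k^2 : ℕ) : ℤ) by push_cast; ring, zpow_natCast]
      rw [show ((k+1:ℕ):ℤ) - ((0:ℕ):ℤ) = ((k+1:ℕ):ℤ) by simp, Finset.Icc_self,
        Finset.prod_singleton, qfact_two]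
      rw [show k+1-0-1 = k by omega, show 2*(k+1)-2*0-2 = 2*k by omega,
        show 2*((k+1:ℕ):ℤ) - 2*((0:ℕ):ℤ) - 1 = 2*(k:ℤ)+1 by push_cast; ring,
        show 2*((k+1:ℕ):ℤ) = 2*(k:ℤ)+2 by push_cast; ring]
      have hF := qfact_ne_zero (2*k)
      have hu : qint (2*(k:ℤ)+1) ≠ 0 := qint_ne_zero _ (by omega)
      have hc4 : qint (2*(k:ℤ)+2) ≠ 0 := qint_ne_zero _ (by omega)
      field_simp
      ring
    · intro i hi hne
      obtain ⟨j, rfl⟩ : ∃ j, i = j + 1 := ⟨i-1, by omega⟩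
      have hc : c ((0:ℕ):ℤ) (((j+1:ℕ):ℤ)+1) = 0 := by
        have := c_nat' 0 (j+1)
        push_cast at this ⊢
        rw [this, A_one]; simp
      have hd : d ((0:ℕ):ℤ) ((j+1:ℕ):ℤ) = 0 := by
        rw [d_nat 0 (j+1), B_one, Polynomial.coeff_one]
        norm_num
      rw [hc, hd]
      norm_num
    · intro h; simp at h

lemma main1 : ∀ k, lhs 1 k = rhs 1 k := by
  intro k
  match k with
  | 0 => rw [lhs_zero, rhs_zero]
  | (k+1) =>
    rw [lhs, Finset.sum_eq_single 0]
    · have hc : c ((1:ℕ):ℤ) (((0:ℕ):ℤ)+1) = -1 := by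
        rw [c_nat' 1 0, A_two]; simp
      have hd : d ((1:ℕ):ℤ) ((0:ℕ):ℤ) = 1 := by rw [d_nat 1 0, B_two]; simp
      rw [hc, hd]
      rw [rhs]
      have he : eexp 1 (k+1) = ((k:ℤ))^2 + 1 := by
        rw [show eexp 1 (k+1) = eexp (2*0+1) (k+1) from rfl, eexp_odd]
        push_cast; ring
      rw [he, zpow_add₀ hq0, zpow_one,
        show ((k:ℤ))^2 = ((k^2 : ℕ) : ℤ) by push_cast; ring, zpow_natCast]
      rw [show ((k+1:ℕ):ℤ) - ((1:ℕ):ℤ) = (k:ℤ) by push_cast; ring]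
      rw [prod_Icc_bot (fun s => qint (2*s)) (by omega : (k:ℤ) ≤ ((k+1:ℕ):ℤ))]
      rw [show ((k:ℤ)+1) = ((k+1:ℕ):ℤ) by push_cast; ring, Finset.Icc_self,
        Finset.prod_singleton, qfact_two]
      rw [show k+1-0-1 = k by omega, show 2*(k+1)-2*0-2 = 2*k by omega,
        show 2*((k+1:ℕ):ℤ) - 2*((0:ℕ):ℤ) - 1 = 2*(k:ℤ)+1 by push_cast; ring,
        show 2*((k+1:ℕ):ℤ) = 2*(k:ℤ)+2 by push_cast; ring]
      have hF := qfact_ne_zero (2*k)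
      have hu : qint (2*(k:ℤ)+1) ≠ 0 := qint_ne_zero _ (by omega)
      have hc4 : qint (2*(k:ℤ)+2) ≠ 0 := qint_ne_zero _ (by omega)
      have hs : qint (2*(k:ℤ)+1) = 1 + q * qint (2*(k:ℤ)) := qint_succ (2*k)
      field_simp
      rw [hs]
      ring
    · intro i hi hne
      obtain ⟨j, rfl⟩ : ∃ j, i = j + 1 := ⟨i-1, by omega⟩
      have hc : c ((1:ℕ):ℤ) (((j+1:ℕ):ℤ)+1) = 0 := by
        have := c_nat' 1 (j+1)
        push_cast at this ⊢
        rw [this, A_two]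
        rw [Polynomial.coeff_neg, Polynomial.coeff_X_pow]
        norm_num
      have hd : d ((1:ℕ):ℤ) ((j+1:ℕ):ℤ) = 0 := by
        rw [d_nat 1 (j+1), B_two, Polynomial.coeff_one]
        norm_num
      rw [hc, hd]
      norm_num
    · intro h; simp at h

lemma main : ∀ n k, lhs n k = rhs n k := by
  intro n
  induction n using Nat.strong_induction_on with
  | _ n IH =>
    match n, IH with
    | 0, _ => exact main0
    | 1, _ => exact main1
    | (t+2), IH =>
      intro k
      match k with
      | 0 => rw [lhs_zero, rhs_zero]
      | (k+1) =>
        rw [lhs_rec, IH (t+1) (by omega), IH t (by omega), rhs_rec]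

/-- Lemma 1 of the paper: for all `n ≥ 1` and `k ≥ 0`,
`∑_{i=0}^{k-1} (-1)^i q^((k-i-1)²)/[2k-2i-2]_q! · (c_{n,i+1} + d_{n,i}/[2k-2i-1]_q)`
equals
`(-1)^n q^((5+3(-1)^n-12k-4(-1)^n k+8k²+8n-8kn+4n²-2(-1)^n n²)/8) (∏_{s=k-n}^k [2s]_q)/[2k]_q!`. -/
theorem lemma_identity (n k : ℕ) (hn : 1 ≤ n) :
    ∑ i ∈ Finset.range k,
      (-1 : K) ^ i * q ^ ((k - i - 1) ^ 2) / qfact (2 * k - 2 * i - 2) *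
        (c (n : ℤ) ((i : ℤ) + 1) + d (n : ℤ) (i : ℤ) / qint (2 * (k : ℤ) - 2 * (i : ℤ) - 1))
      =
    (-1 : K) ^ n *
      q ^ ((5 + 3 * (-1 : ℤ) ^ n - 12 * (k : ℤ) - 4 * (-1 : ℤ) ^ n * (k : ℤ) +
            8 * (k : ℤ) ^ 2 + 8 * (n : ℤ) - 8 * (k : ℤ) * (n : ℤ) + 4 * (n : ℤ) ^ 2 -
            2 * (-1 : ℤ) ^ n * (n : ℤ) ^ 2) / 8) *
      (∏ s ∈ Finset.Icc ((k : ℤ) - (n : ℤ)) (k : ℤ), qint (2 * s)) / qfact (2 * k) := by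
  exact main n k
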